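/- The Stieltjes measure μ associated to the Minkowski question mark function (i.e. μ([0,x]) = ?(x)) is invariant under the Gauss map G(x) = 1/x mod 1. -/

import Mathlib

/-!
For `n ≥ 1` and `0 ≤ x < 1`, Salem's series gives the self-similarity
`?(1/(n+x)) = 2^{-n} (2 - ?(x))`. Hence the inverse branch `x ↦ 1/(n+x)` of the Gauss map sends
`μ`-mass on `(x, c]` to `2^{-n}` times that mass, and `μ` has no atom at `1/(n+x)` because
`μ (x, c] → 0` as `c ↓ x`. Since `μ` lives on `(0, 1]`, for `0 ≤ t < 1` the set
`G⁻¹[0, t]` is, up to a null set, the disjoint union of the intervals `[1/(n+t), 1/n]`,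
of masses `2^{-n} ?(t)`, which add up to `?(t) = μ [0, t]`.
-/

open MeasureTheory Set

/-- The Gauss map `x ↦ 1/x mod 1` (with `0 ↦ 0`). -/
noncomputable def gaussMap (x : ℝ) : ℝ := if x = 0 then 0 else Int.fract x⁻¹

/-- The `(k+1)`-st continued fraction partial quotient `a_{k+1}(x)`. -/
noncomputable def cfDigit (k : ℕ) (x : ℝ) : ℕ := ⌊(gaussMap^[k] x)⁻¹⌋₊

/-- `cfSum n x = a_1(x) + ⋯ + a_n(x)`. -/
noncomputable def cfSum (n : ℕ) (x : ℝ) : ℕ := ∑ i ∈ Finset.range n, cfDigit i x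

/-- Minkowski's question mark function, defined by Salem's series
`?(x) = Σ_{k≥1} (-1)^{k-1} 2^{1-(a_1+⋯+a_k)}`, which is a finite sum for rational `x`
(the terms are cut off once the Gauss-map orbit reaches `0`). -/
noncomputable def mink (x : ℝ) : ℝ :=
  ∑' k : ℕ, if gaussMap^[k] x = 0 then 0 else
    (-1 : ℝ) ^ k * (2 : ℝ) ^ ((1 : ℤ) - (cfSum (k + 1) x : ℤ))

open Filter Function Topology

noncomputable def minkTerm (x : ℝ) (k : ℕ) : ℝ :=
  if gaussMap^[k] x = 0 then 0 else
    (-1 : ℝ) ^ k * (2 : ℝ) ^ ((1 : ℤ) - (cfSum (k + 1) x : ℤ))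

lemma mink_eq_tsum_minkTerm (x : ℝ) : mink x = ∑' k, minkTerm x k := rfl

@[simp]
lemma gaussMap_zero : gaussMap 0 = 0 := by simp [gaussMap]

lemma gaussMap_mem_Ico (x : ℝ) : gaussMap x ∈ Ico (0 : ℝ) 1 := by
  unfold gaussMap
  split_ifs
  · exact ⟨le_rfl, one_pos⟩
  · exact ⟨Int.fract_nonneg _, Int.fract_lt_one _⟩

lemma gaussMap_iterate_mem_Icc {x : ℝ} (hx : x ∈ Icc (0 : ℝ) 1) (k : ℕ) :
    gaussMap^[k] x ∈ Icc (0 : ℝ) 1 := by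
  cases k with
  | zero => exact hx
  | succ k =>
    rw [iterate_succ_apply']
    exact Ico_subset_Icc_self (gaussMap_mem_Ico _)

lemma gaussMap_iterate_ne_zero_of_le {x : ℝ} {i k : ℕ} (hik : i ≤ k)
    (h : gaussMap^[k] x ≠ 0) : gaussMap^[i] x ≠ 0 := by
  intro h0
  obtain ⟨j, rfl⟩ := Nat.exists_eq_add_of_le hik
  rw [add_comm, iterate_add_apply, h0, iterate_fixed gaussMap_zero] at h
  exact h rfl

lemma one_le_cfDigit {x : ℝ} (hx : x ∈ Icc (0 : ℝ) 1) {i : ℕ} (h : gaussMap^[i] x ≠ 0) :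
    1 ≤ cfDigit i x := by
  obtain ⟨h0, h1⟩ := gaussMap_iterate_mem_Icc hx i
  exact Nat.le_floor (by exact_mod_cast one_le_inv_iff₀.2 ⟨h0.lt_of_ne' h, h1⟩)

lemma le_cfSum {x : ℝ} (hx : x ∈ Icc (0 : ℝ) 1) {k : ℕ} (h : gaussMap^[k] x ≠ 0) :
    k + 1 ≤ cfSum (k + 1) x := by
  calc k + 1 = ∑ _i ∈ Finset.range (k + 1), 1 := by simp
    _ ≤ cfSum (k + 1) x := Finset.sum_le_sum fun i hi =>
      one_le_cfDigit hx <|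
        gaussMap_iterate_ne_zero_of_le (Nat.lt_succ_iff.1 (Finset.mem_range.1 hi)) h

lemma abs_minkTerm_le {x : ℝ} (hx : x ∈ Icc (0 : ℝ) 1) (k : ℕ) :
    |minkTerm x k| ≤ 2⁻¹ ^ k := by
  unfold minkTerm
  split_ifs with h
  · simp
  · have hS : (k : ℤ) + 1 ≤ cfSum (k + 1) x := by exact_mod_cast le_cfSum hx h
    rw [abs_mul, abs_pow, abs_neg, abs_one, one_pow, one_mul, abs_of_pos (by positivity),
      inv_pow, ← zpow_natCast, ← zpow_neg]
    exact zpow_le_zpow_right₀ one_le_two (by omega)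

lemma summable_minkTerm {x : ℝ} (hx : x ∈ Icc (0 : ℝ) 1) : Summable (minkTerm x) :=
  Summable.of_norm_bounded (summable_geometric_of_lt_one (by norm_num) (by norm_num))
    (abs_minkTerm_le hx)

lemma mink_le_two {x : ℝ} (hx : x ∈ Icc (0 : ℝ) 1) : mink x ≤ 2 := by
  calc mink x ≤ ∑' k : ℕ, (2⁻¹ : ℝ) ^ k :=
        (summable_minkTerm hx).tsum_le_tsum
          (fun k => (le_abs_self _).trans (abs_minkTerm_le hx k))
          (summable_geometric_of_lt_one (by norm_num) (by norm_num))
    _ = 2 := tsum_geometric_inv_two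

lemma mink_zero : mink 0 = 0 := by
  simp [mink_eq_tsum_minkTerm, minkTerm, iterate_fixed gaussMap_zero]

section InverseBranch

variable {n : ℕ} {x : ℝ}

lemma gaussMap_inv_natCast_add (hx : x ∈ Ico (0 : ℝ) 1) : gaussMap ((n + x)⁻¹) = x := by
  rcases eq_or_ne ((n : ℝ) + x) 0 with h | h
  · rw [h, inv_zero, gaussMap_zero]
    linarith [hx.1, n.cast_nonneg (α := ℝ)]
  rw [gaussMap, if_neg (inv_ne_zero h), inv_inv, add_comm, Int.fract_add_natCast,
    Int.fract_eq_self.2 hx]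

lemma cfDigit_zero_inv_natCast_add (hx : x ∈ Ico (0 : ℝ) 1) :
    cfDigit 0 ((n + x)⁻¹) = n := by
  rw [cfDigit, iterate_zero_apply, inv_inv, Nat.floor_eq_iff (by linarith [hx.1])]
  constructor <;> linarith [hx.1, hx.2]

lemma cfSum_succ_inv_natCast_add (hx : x ∈ Ico (0 : ℝ) 1) (m : ℕ) :
    cfSum (m + 1) ((n + x)⁻¹) = n + cfSum m x := by
  simp only [cfSum, Finset.sum_range_succ', cfDigit, iterate_succ_apply,
    gaussMap_inv_natCast_add hx]
  rw [← cfDigit, cfDigit_zero_inv_natCast_add hx, add_comm]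

lemma minkTerm_inv_natCast_add_zero (hn : 1 ≤ n) (hx : x ∈ Ico (0 : ℝ) 1) :
    minkTerm ((n + x)⁻¹) 0 = 2 * 2⁻¹ ^ n := by
  have hne : ((n : ℝ) + x)⁻¹ ≠ 0 := inv_ne_zero (by have := hx.1; positivity)
  rw [minkTerm, iterate_zero_apply, if_neg hne, zero_add, cfSum_succ_inv_natCast_add hx,
    cfSum, Finset.sum_range_zero, add_zero, pow_zero, one_mul, zpow_sub₀ two_ne_zero, zpow_one,
    zpow_natCast, div_eq_mul_inv, inv_pow]

lemma minkTerm_inv_natCast_add_succ (hx : x ∈ Ico (0 : ℝ) 1) (k : ℕ) :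
    minkTerm ((n + x)⁻¹) (k + 1) = -(2⁻¹ ^ n * minkTerm x k) := by
  rw [minkTerm, minkTerm, iterate_succ_apply, gaussMap_inv_natCast_add hx,
    cfSum_succ_inv_natCast_add hx]
  split_ifs
  · simp
  · push_cast
    rw [show (1 : ℤ) - (n + cfSum (k + 1) x) = 1 - cfSum (k + 1) x + -n by ring,
      zpow_add₀ two_ne_zero, zpow_neg, zpow_natCast, inv_pow, pow_succ]
    ring

lemma mink_inv_natCast_add (hn : 1 ≤ n) (hx : x ∈ Ico (0 : ℝ) 1) :
    mink ((n + x)⁻¹) = 2⁻¹ ^ n * (2 - mink x) := by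
  have hy : ((n : ℝ) + x)⁻¹ ∈ Icc (0 : ℝ) 1 := by
    have : (1 : ℝ) ≤ n := by exact_mod_cast hn
    exact ⟨by have := hx.1; positivity, inv_le_one_of_one_le₀ (by linarith [hx.1])⟩
  rw [mink_eq_tsum_minkTerm, (summable_minkTerm hy).tsum_eq_zero_add,
    minkTerm_inv_natCast_add_zero hn hx]
  simp only [minkTerm_inv_natCast_add_succ hx, tsum_neg, tsum_mul_left,
    ← mink_eq_tsum_minkTerm]
  ring

end InverseBranch

lemma exists_eq_inv_natCast_add {y : ℝ} (hy : y ∈ Ioc (0 : ℝ) 1) :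
    ∃ n : ℕ, 1 ≤ n ∧ ∃ x ∈ Ico (0 : ℝ) 1, y = (n + x)⁻¹ := by
  have hinv : 1 ≤ y⁻¹ := one_le_inv_iff₀.2 hy
  refine ⟨⌊y⁻¹⌋₊, Nat.le_floor (by exact_mod_cast hinv), y⁻¹ - ⌊y⁻¹⌋₊,
    ⟨sub_nonneg.2 (Nat.floor_le (by linarith)), ?_⟩, by simp⟩
  linarith [Nat.lt_floor_add_one y⁻¹]

lemma mink_nonneg {y : ℝ} (hy : y ∈ Icc (0 : ℝ) 1) : 0 ≤ mink y := by
  rcases hy.1.eq_or_lt with rfl | hy0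
  · rw [mink_zero]
  obtain ⟨n, hn, x, hx, rfl⟩ := exists_eq_inv_natCast_add ⟨hy0, hy.2⟩
  rw [mink_inv_natCast_add hn hx]
  have := mink_le_two (Ico_subset_Icc_self hx)
  have : (0 : ℝ) ≤ 2⁻¹ ^ n := by positivity
  nlinarith

lemma measurable_gaussMap : Measurable gaussMap :=
  measurable_const.ite (measurableSet_singleton 0) (measurable_fract.comp measurable_inv)

lemma gaussMap_preimage_Iic_inter_Ioc {t : ℝ} (ht0 : 0 ≤ t) (ht1 : t < 1) :
    gaussMap ⁻¹' Iic t ∩ Ioc 0 1 = ⋃ n : ℕ, Icc ((n + 1 + t)⁻¹) ((n + 1)⁻¹) := by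
  ext y
  simp only [mem_inter_iff, mem_preimage, mem_Iic, mem_iUnion]
  constructor
  · rintro ⟨hGy, hy⟩
    obtain ⟨m, hm, x, hx, rfl⟩ := exists_eq_inv_natCast_add hy
    rw [gaussMap_inv_natCast_add hx] at hGy
    obtain ⟨n, rfl⟩ := Nat.exists_eq_add_of_le' hm
    have : (0 : ℝ) ≤ n := n.cast_nonneg
    push_cast
    exact ⟨n, inv_anti₀ (by linarith [hx.1]) (by linarith),
      inv_anti₀ (by positivity) (by linarith [hx.1])⟩
  · rintro ⟨n, hlo, hhi⟩
    have : (0 : ℝ) ≤ n := n.cast_nonneg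
    have hy0 : 0 < y := (inv_pos.2 (by linarith)).trans_le hlo
    have hy1 : y ≤ 1 := hhi.trans (inv_le_one_of_one_le₀ (by linarith))
    obtain ⟨m, hm, x, hx, rfl⟩ := exists_eq_inv_natCast_add ⟨hy0, hy1⟩
    refine ⟨?_, hy0, hy1⟩
    rw [gaussMap_inv_natCast_add hx]
    have hpos : (0 : ℝ) < m + x := by have := hx.1; positivity
    have hlo' := (inv_le_inv₀ (by linarith) hpos).1 hlo
    have hhi' := (inv_le_inv₀ hpos (by positivity)).1 hhi
    have hmn : (m : ℝ) = n + 1 := by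
      have h1 : m < n + 2 := by exact_mod_cast (show (m : ℝ) < n + 2 by linarith [hx.1])
      have h2 : n < m := by exact_mod_cast (show (n : ℝ) < m by linarith [hx.2])
      exact_mod_cast (show m = n + 1 by omega)
    linarith

lemma pairwise_disjoint_Icc_inv {t : ℝ} (ht0 : 0 ≤ t) (ht1 : t < 1) :
    Pairwise (Disjoint on fun n : ℕ => Icc ((n + 1 + t)⁻¹) (((n : ℝ) + 1)⁻¹)) := by
  refine (pairwise_disjoint_on _).2 fun m n hmn => Set.disjoint_left.2 fun y hm hn => ?_
  have : (m : ℝ) + 1 ≤ n := by exact_mod_cast hmn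
  have : (0 : ℝ) ≤ m := m.cast_nonneg
  have : (n + 1 : ℝ)⁻¹ < (m + 1 + t)⁻¹ := inv_strictAnti₀ (by linarith) (by linarith)
  linarith [hm.1, hn.2]

lemma tendsto_measure_Ioc_nhdsGT {μ : Measure ℝ} [IsFiniteMeasure μ] (x : ℝ) :
    Tendsto (fun c => μ (Ioc x c)) (𝓝[>] x) (𝓝 0) := by
  have h := tendsto_measure_biInter_gt (μ := μ) (s := Ioc x) (a := x)
    (fun _ _ => measurableSet_Ioc.nullMeasurableSet)
    (fun _ _ _ hij => Ioc_subset_Ioc_right hij) ⟨x + 1, by linarith, measure_ne_top μ _⟩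
  have hempty : ⋂ r > x, Ioc x r = ∅ := eq_empty_of_forall_notMem fun z hz => by
    simp only [mem_iInter, mem_Ioc] at hz
    have hxz := (hz (x + 1) (by linarith)).1
    linarith [(hz ((x + z) / 2) (by linarith)).2]
  rwa [hempty, measure_empty] at h

lemma measure_Icc_eq_measure_Ioc {α : Type*} [PartialOrder α] [MeasurableSpace α]
    {μ : Measure α} {a b : α} (ha : μ {a} = 0) (hab : a ≤ b) :
    μ (Icc a b) = μ (Ioc a b) := by
  refine le_antisymm ?_ (measure_mono Ioc_subset_Icc_self)
  calc μ (Icc a b) = μ (Ioc a b ∪ {a}) := by rw [Ioc_union_left hab]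
    _ ≤ μ (Ioc a b) + μ {a} := measure_union_le _ _
    _ = μ (Ioc a b) := by rw [ha, add_zero]

section MinkowskiMeasure

variable {μ : Measure ℝ}

lemma measure_Ioc_eq_ofReal_mink_sub
    (hdist : ∀ x ∈ Icc (0 : ℝ) 1, μ (Icc 0 x) = ENNReal.ofReal (mink x))
    {a b : ℝ} (ha : 0 ≤ a) (hab : a ≤ b) (hb : b ≤ 1) :
    μ (Ioc a b) = ENNReal.ofReal (mink b - mink a) := by
  have hunion : μ (Icc 0 a) + μ (Ioc a b) = μ (Icc 0 b) := by
    rw [← measure_union (Set.disjoint_left.2 fun z hz hz' => hz'.1.not_ge hz.2)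
      measurableSet_Ioc, Icc_union_Ioc_eq_Icc ha hab]
  rw [hdist a ⟨ha, hab.trans hb⟩, hdist b ⟨ha.trans hab, hb⟩] at hunion
  rw [ENNReal.ofReal_sub _ (mink_nonneg ⟨ha, hab.trans hb⟩), ← hunion,
    ENNReal.add_sub_cancel_left ENNReal.ofReal_ne_top]

lemma measure_Ioc_inv_natCast_add
    (hdist : ∀ x ∈ Icc (0 : ℝ) 1, μ (Icc 0 x) = ENNReal.ofReal (mink x))
    {n : ℕ} (hn : 1 ≤ n) {x c : ℝ} (hx : 0 ≤ x) (hxc : x ≤ c) (hc : c < 1) :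
    μ (Ioc ((n + c)⁻¹) ((n + x)⁻¹)) = 2⁻¹ ^ n * μ (Ioc x c) := by
  have hn' : (1 : ℝ) ≤ n := by exact_mod_cast hn
  rw [measure_Ioc_eq_ofReal_mink_sub hdist (inv_pos.2 (by linarith)).le
      (inv_anti₀ (by positivity) (by linarith)) (inv_le_one_of_one_le₀ (by linarith)),
    measure_Ioc_eq_ofReal_mink_sub hdist hx hxc hc.le,
    mink_inv_natCast_add hn ⟨hx, hxc.trans_lt hc⟩,
    mink_inv_natCast_add hn ⟨hx.trans hxc, hc⟩,
    ← mul_sub, show (2 : ℝ) - mink x - (2 - mink c) = mink c - mink x by ring,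
    ENNReal.ofReal_mul (by positivity), ENNReal.ofReal_pow (by norm_num),
    ENNReal.ofReal_inv_of_pos two_pos, ENNReal.ofReal_ofNat]

lemma measure_singleton_inv_natCast_add [IsFiniteMeasure μ]
    (hdist : ∀ x ∈ Icc (0 : ℝ) 1, μ (Icc 0 x) = ENNReal.ofReal (mink x))
    {n : ℕ} (hn : 1 ≤ n) {x : ℝ} (hx : x ∈ Ico (0 : ℝ) 1) :
    μ {((n : ℝ) + x)⁻¹} = 0 := by
  have hbound : ∀ᶠ c in 𝓝[>] x, μ {((n : ℝ) + x)⁻¹} ≤ μ (Ioc x c) := by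
    filter_upwards [Ioo_mem_nhdsGT hx.2] with c hc
    have : (0 : ℝ) < n := by exact_mod_cast hn
    calc μ {((n : ℝ) + x)⁻¹} ≤ μ (Ioc ((n + c)⁻¹) ((n + x)⁻¹)) :=
          measure_mono (singleton_subset_iff.2
            ⟨inv_strictAnti₀ (by linarith [hx.1]) (by linarith [hc.1]), le_rfl⟩)
      _ = 2⁻¹ ^ n * μ (Ioc x c) := measure_Ioc_inv_natCast_add hdist hn hx.1 hc.1.le hc.2
      _ ≤ μ (Ioc x c) := mul_le_of_le_one_left' (pow_le_one₀ (by norm_num) (by norm_num))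
  exact nonpos_iff_eq_zero.1 (ge_of_tendsto (tendsto_measure_Ioc_nhdsGT x) hbound)

lemma measure_Icc_inv_succ_add [IsFiniteMeasure μ]
    (hdist : ∀ x ∈ Icc (0 : ℝ) 1, μ (Icc 0 x) = ENNReal.ofReal (mink x))
    {t : ℝ} (ht0 : 0 ≤ t) (ht1 : t < 1) (n : ℕ) :
    μ (Icc ((n + 1 + t)⁻¹) ((n + 1)⁻¹)) = 2⁻¹ ^ (n + 1) * μ (Ioc 0 t) := by
  have hatom := measure_singleton_inv_natCast_add hdist (Nat.le_add_left 1 n) ⟨ht0, ht1⟩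
  have hIoc := measure_Ioc_inv_natCast_add hdist (Nat.le_add_left 1 n) le_rfl ht0 ht1
  push_cast at hatom hIoc
  rw [add_zero] at hIoc
  rw [measure_Icc_eq_measure_Ioc hatom (inv_anti₀ (by positivity) (by linarith)), hIoc]

lemma measure_compl_Ioc_zero_one [IsProbabilityMeasure μ]
    (hdist : ∀ x ∈ Icc (0 : ℝ) 1, μ (Icc 0 x) = ENNReal.ofReal (mink x))
    (hsupp : μ (Icc (0 : ℝ) 1) = 1) : μ (Ioc 0 1)ᶜ = 0 := by
  have hzero : μ {0} = 0 := by
    rw [← Icc_self, hdist 0 ⟨le_rfl, zero_le_one⟩, mink_zero, ENNReal.ofReal_zero]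
  rw [prob_compl_eq_zero_iff measurableSet_Ioc, ← measure_Icc_eq_measure_Ioc hzero zero_le_one,
    hsupp]

end MinkowskiMeasure

lemma ENNReal.tsum_inv_two_pow_succ : ∑' n : ℕ, (2⁻¹ : ENNReal) ^ (n + 1) = 1 := by
  simp_rw [pow_succ', ENNReal.tsum_mul_left, ENNReal.tsum_geometric_two]
  exact ENNReal.inv_mul_cancel two_ne_zero ENNReal.ofNat_ne_top

/-- The Minkowski–Stieltjes measure `μ` (the probability measure on `[0,1]` with
distribution function `?`) is invariant under the Gauss map. -/
theorem minkMeasure_gauss_invariant (μ : Measure ℝ) [IsProbabilityMeasure μ]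
    (hdist : ∀ x ∈ Icc (0 : ℝ) 1, μ (Icc 0 x) = ENNReal.ofReal (mink x))
    (hsupp : μ (Icc (0 : ℝ) 1) = 1) :
    Measure.map gaussMap μ = μ := by
  have hnull : μ (Ioc 0 1)ᶜ = 0 := measure_compl_Ioc_zero_one hdist hsupp
  refine Measure.ext_of_Iic _ _ fun t => ?_
  rw [Measure.map_apply measurable_gaussMap measurableSet_Iic, ← measure_inter_conull hnull,
    ← measure_inter_conull (s := Iic t) hnull]
  rcases lt_or_ge t 0 with ht0 | ht0
  · have hempty : gaussMap ⁻¹' Iic t = ∅ :=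
      eq_empty_of_forall_notMem fun y hy => (gaussMap_mem_Ico y).1.not_gt (hy.trans_lt ht0)
    rw [hempty, empty_inter, Iic_inter_Ioc_of_le (ht0.le.trans zero_le_one),
      Ioc_eq_empty (lt_asymm ht0)]
  rcases le_or_gt 1 t with ht1 | ht1
  · have huniv : gaussMap ⁻¹' Iic t = univ :=
      eq_univ_of_forall fun y => (gaussMap_mem_Ico y).2.le.trans ht1
    rw [huniv, univ_inter, inter_eq_right.2 fun y hy => hy.2.trans ht1]
  rw [gaussMap_preimage_Iic_inter_Ioc ht0 ht1,
    measure_iUnion (pairwise_disjoint_Icc_inv ht0 ht1) fun _ => measurableSet_Icc,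
    Iic_inter_Ioc_of_le ht1.le]
  simp_rw [measure_Icc_inv_succ_add hdist ht0 ht1, ENNReal.tsum_mul_right,
    ENNReal.tsum_inv_two_pow_succ, one_mul]
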